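/- If (U, ≤) is an ordered supertropical monoid, then the underlying supertropical monoid U is a supertropical semiring (i.e., the forced addition is associative and distributive). -/

import Mathlib

universe u v w

class STM (U : Type u) extends CommMonoid U, Zero U where
  zero_mul' : ∀ x : U, 0 * x = 0
  e : U
  e_idem : e * e = e
  ghost_zero : ∀ x : U, e * x = 0 → x = 0
  le : U → U → Prop
  le_refl : ∀ x : U, le x x
  le_trans : ∀ x y z : U, le x y → le y z → le x z
  le_total : ∀ x y : U, le x y ∨ le y x
  le_antisymm : ∀ x y : U, e * x = x → e * y = y → le x y → le y x → x = y
  le_e : ∀ x y : U, le x y ↔ le (e * x) (e * y)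
  mul_le_mul : ∀ x y z : U, le x y → le (x * z) (y * z)
  zero_le : ∀ x : U, le 0 x

namespace STM

variable {U : Type u} [STM U]

/-- `x` is a ghost element, i.e. `x ∈ eU`. -/
def Ghost (x : U) : Prop := e * x = x

/-- strict inequality for the ordering of the ghost ideal -/
def slt (x y : U) : Prop := le x y ∧ ¬ le y x

open scoped Classical in
/-- the forced addition on a supertropical monoid -/
noncomputable def add (x y : U) : U :=
  if slt (e * x) (e * y) then y
  else if slt (e * y) (e * x) then x
  else e * x

/-- the supertropical monoid `U` "is" a (supertropical) semiring: the forced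
addition is associative and distributive. -/
def IsSemiring (U : Type u) [STM U] : Prop :=
  (∀ x y z : U, add (add x y) z = add x (add y z)) ∧
  (∀ x y z : U, add x y * z = add (x * z) (y * z))

end STM

open STM

/-- A transmission between supertropical monoids. -/
structure IsTransmission {U : Type u} {V : Type v} [STM U] [STM V] (α : U → V) : Prop where
  map_zero : α 0 = 0
  map_one : α 1 = 1
  map_mul : ∀ x y : U, α (x * y) = α x * α y
  map_e : α (STM.e : U) = (STM.e : V)
  mono : ∀ x y : U, Ghost x → Ghost y → STM.le x y → STM.le (α x) (α y)


/-- `r` makes the supertropical monoid `U` an ordered supertropical monoid. -/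
structure IsOST {U : Type u} [STM U] (r : U → U → Prop) : Prop where
  refl : ∀ x : U, r x x
  trans : ∀ x y z : U, r x y → r y z → r x z
  antisymm : ∀ x y : U, r x y → r y x → x = y
  total : ∀ x y : U, r x y ∨ r y x
  mul_right : ∀ x y z : U, r x y → r (x * z) (y * z)
  restrict : ∀ x y : U, Ghost x → Ghost y → (r x y ↔ STM.le x y)
  zero_one : r 0 1
  one_e : r 1 (STM.e : U)

/-!
Associativity holds for the forced addition of every supertropical monoid, by a case split on
how the ghost values `e * x`, `e * y`, `e * z` compare. For distributivity the only problematic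
case is `e * x < e * y` with `e * x * z = e * y * z`, where `(x + y) * z = y * z` but
`x * z + y * z = e * y * z`. In an ordered supertropical monoid `e * x ≤ y` (otherwise
`y ≤ e * x` would give `e * y ≤ e * x`), so `e * y * z = e * x * z ≤ y * z ≤ e * y * z`
by `1 ≤ e`, and `y * z` is ghost.
-/

namespace STM

variable {U : Type u} [STM U] {x y z : U}

theorem e_mul_e_mul (x : U) : (e : U) * (e * x) = e * x := by
  rw [← mul_assoc, e_idem]

theorem le_e_mul_left : le ((e : U) * x) y ↔ le x y := by
  rw [le_e (e * x), e_mul_e_mul, ← le_e]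

theorem le_e_mul_right : le x ((e : U) * y) ↔ le x y := by
  rw [le_e x, e_mul_e_mul, ← le_e]

theorem slt_e_mul_left : slt ((e : U) * x) y ↔ slt x y := by
  simp only [slt, le_e_mul_left, le_e_mul_right]

theorem slt_e_mul_right : slt x ((e : U) * y) ↔ slt x y := by
  simp only [slt, le_e_mul_left, le_e_mul_right]

theorem le_of_e_mul_eq (h : (e : U) * x = e * y) : le x y := by
  rw [le_e, h]
  exact le_refl _

theorem slt_trans (hxy : slt x y) (hyz : slt y z) : slt x z :=
  ⟨le_trans _ _ _ hxy.1 hyz.1, fun hzx => hxy.2 (le_trans _ _ _ hyz.1 hzx)⟩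

theorem slt_of_slt_of_e_mul_eq (hxy : slt x y) (h : (e : U) * y = e * z) : slt x z :=
  ⟨le_trans _ _ _ hxy.1 (le_of_e_mul_eq h),
    fun hzx => hxy.2 (le_trans _ _ _ (le_of_e_mul_eq h) hzx)⟩

theorem slt_of_e_mul_eq_of_slt (h : (e : U) * x = e * y) (hyz : slt y z) : slt x z :=
  ⟨le_trans _ _ _ (le_of_e_mul_eq h) hyz.1,
    fun hzx => hyz.2 (le_trans _ _ _ hzx (le_of_e_mul_eq h))⟩

theorem not_slt_of_le (h : le x y) : ¬ slt y x := fun h' => h'.2 h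

theorem slt_or_slt_or_e_mul_eq (x y : U) : slt x y ∨ slt y x ∨ (e : U) * x = e * y := by
  by_cases hxy : le x y <;> by_cases hyx : le y x
  · refine Or.inr (Or.inr (le_antisymm _ _ (e_mul_e_mul x) (e_mul_e_mul y) ?_ ?_))
    · rwa [← le_e]
    · rwa [← le_e]
  · exact Or.inl ⟨hxy, hyx⟩
  · exact Or.inr (Or.inl ⟨hyx, hxy⟩)
  · exact ((le_total x y).elim hxy hyx).elim

theorem add_eq_right_of_slt (h : slt x y) : add x y = y := by
  rw [add, if_pos (slt_e_mul_left.mpr (slt_e_mul_right.mpr h))]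

theorem add_eq_left_of_slt (h : slt y x) : add x y = x := by
  rw [add, if_neg (not_slt_of_le (le_e_mul_left.mpr (le_e_mul_right.mpr h.1))),
    if_pos (slt_e_mul_left.mpr (slt_e_mul_right.mpr h))]

theorem add_eq_e_mul_of_e_mul_eq (h : (e : U) * x = e * y) : add x y = e * x := by
  rw [add, h, if_neg fun h' => h'.2 h'.1, if_neg fun h' => h'.2 h'.1]

theorem add_comm (x y : U) : add x y = add y x := by
  rcases slt_or_slt_or_e_mul_eq x y with h | h | h
  · rw [add_eq_right_of_slt h, add_eq_left_of_slt h]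
  · rw [add_eq_left_of_slt h, add_eq_right_of_slt h]
  · rw [add_eq_e_mul_of_e_mul_eq h, add_eq_e_mul_of_e_mul_eq h.symm, h]

theorem add_assoc (x y z : U) : add (add x y) z = add x (add y z) := by
  rcases slt_or_slt_or_e_mul_eq x y with hxy | hyx | hxy <;>
    rcases slt_or_slt_or_e_mul_eq y z with hyz | hzy | hyz
  · rw [add_eq_right_of_slt hxy, add_eq_right_of_slt hyz, add_eq_right_of_slt (slt_trans hxy hyz)]
  · rw [add_eq_right_of_slt hxy, add_eq_left_of_slt hzy, add_eq_right_of_slt hxy]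
  · rw [add_eq_right_of_slt hxy, add_eq_e_mul_of_e_mul_eq hyz,
      add_eq_right_of_slt (slt_e_mul_right.mpr hxy)]
  · rw [add_eq_left_of_slt hyx, add_eq_right_of_slt hyz]
  · rw [add_eq_left_of_slt hyx, add_eq_left_of_slt hzy, add_eq_left_of_slt hyx,
      add_eq_left_of_slt (slt_trans hzy hyx)]
  · rw [add_eq_left_of_slt hyx, add_eq_e_mul_of_e_mul_eq hyz,
      add_eq_left_of_slt (slt_of_e_mul_eq_of_slt hyz.symm hyx),
      add_eq_left_of_slt (slt_e_mul_left.mpr hyx)]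
  · rw [add_eq_e_mul_of_e_mul_eq hxy, add_eq_right_of_slt hyz,
      add_eq_right_of_slt (slt_e_mul_left.mpr (slt_of_e_mul_eq_of_slt hxy hyz)),
      add_eq_right_of_slt (slt_of_e_mul_eq_of_slt hxy hyz)]
  · rw [add_eq_e_mul_of_e_mul_eq hxy, add_eq_left_of_slt hzy, add_eq_e_mul_of_e_mul_eq hxy,
      add_eq_left_of_slt (slt_e_mul_right.mpr (slt_of_slt_of_e_mul_eq hzy hxy.symm))]
  · rw [add_eq_e_mul_of_e_mul_eq hxy, add_eq_e_mul_of_e_mul_eq hyz,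
      add_eq_e_mul_of_e_mul_eq (by rw [e_mul_e_mul, hxy, hyz]),
      add_eq_e_mul_of_e_mul_eq (by rw [e_mul_e_mul, hxy]), e_mul_e_mul]

theorem add_mul_of_e_mul_eq (h : (e : U) * x = e * y) (z : U) :
    add x y * z = add (x * z) (y * z) := by
  have hz : (e : U) * (x * z) = e * (y * z) := by rw [← mul_assoc, ← mul_assoc, h]
  rw [add_eq_e_mul_of_e_mul_eq h, add_eq_e_mul_of_e_mul_eq hz, mul_assoc]

end STM

namespace IsOST

open STM

variable {U : Type u} [STM U] {r : U → U → Prop} {x y z : U}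

theorem le_e_mul (hr : IsOST r) (x : U) : r x (e * x) := by
  simpa only [one_mul] using hr.mul_right 1 e x hr.one_e

theorem e_mul_le_of_slt (hr : IsOST r) (h : slt x y) : r (e * x) y := by
  refine (hr.total _ _).resolve_right fun hyx => h.2 ?_
  have hyx' := hr.mul_right _ _ e hyx
  rw [mul_comm, mul_comm _ e, e_mul_e_mul] at hyx'
  rw [le_e]
  exact (hr.restrict _ _ (e_mul_e_mul y) (e_mul_e_mul x)).mp hyx'

theorem ghost_of_slt_of_e_mul_eq (hr : IsOST r) (h : slt x y)
    (hz : (e : U) * (x * z) = e * (y * z)) : Ghost (y * z) := by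
  have hle : r (e * (y * z)) (y * z) := by
    simpa only [mul_assoc, hz] using hr.mul_right _ _ z (hr.e_mul_le_of_slt h)
  exact (hr.antisymm _ _ (hr.le_e_mul _) hle).symm

theorem add_mul_of_slt (hr : IsOST r) (h : slt x y) (z : U) :
    add x y * z = add (x * z) (y * z) := by
  rw [add_eq_right_of_slt h]
  rcases slt_or_slt_or_e_mul_eq (x * z) (y * z) with hlt | hgt | heq
  · rw [add_eq_right_of_slt hlt]
  · exact absurd hgt (not_slt_of_le (mul_le_mul _ _ _ h.1))
  · rw [add_eq_e_mul_of_e_mul_eq heq, heq, hr.ghost_of_slt_of_e_mul_eq h heq]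

theorem add_mul (hr : IsOST r) (x y z : U) : add x y * z = add (x * z) (y * z) := by
  rcases slt_or_slt_or_e_mul_eq x y with hxy | hyx | hxy
  · exact hr.add_mul_of_slt hxy z
  · rw [STM.add_comm, hr.add_mul_of_slt hyx z, STM.add_comm]
  · exact add_mul_of_e_mul_eq hxy z

end IsOST

/-- The underlying supertropical monoid of an ordered supertropical monoid is a
supertropical semiring. -/
theorem ost_is_semiring {U : Type u} [STM U] (r : U → U → Prop) (hr : IsOST r) :
    IsSemiring U :=
  ⟨STM.add_assoc, hr.add_mul⟩
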